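/- arXiv:2205.10896 — 2 statements merged into one kernel-verified Lean document; each statement's English description precedes it below -/
import Mathlib

section
/- Let U_{ij}^{(0)}(-t, s_1,...,s_m, t) = G_{ij}^{(0)}(s_m,t) W_s G_{ij}^{(0)}(s_{m-1},s_m) W_s ⋯ W_s G_{ij}^{(0)}(s_1,s_2) W_s G_{ij}^{(0)}(-t,s_1), where exactly one of the factors G_{ij}^{(0)}(s_k,s_{k+1}) crosses zero (s_k < 0 ≤ s_{k+1}) and all others satisfy the shift invariance. Then for Δt ≥ 0, U_{ij}^{(0)}(-t−Δt, I_{Δt}(s), t+Δt) = Σ_{k,l} b_{kl}^{ij} U_{kl}^{(0)}(-t, s, t), where b_{kl}^{ij} satisfy exp(iΔt H_s)|i⟩⟨j|exp(−iΔt H_s) = Σ_{k,l} b_{kl}^{ij}|k⟩⟨l|. -/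
/-!
A segment lying on one side of `0` contributes a propagator that depends only on the length
of the segment, not on `(i, j)`, so `I_{Δt}` leaves it unchanged. In a sorted list exactly one
segment crosses `0`, and `I_{Δt}` stretches it by `Δt` at both ends; splitting the two
exponentials there exposes `exp(iΔt H_s) |i⟩⟨j| exp(-iΔt H_s) = Σ b_{kl}^{ij} |k⟩⟨l|` in the
middle of that factor, and the product is linear in it.
-/

/-- The basis bare propagator `𝒢_{ij}^{(0)}(s_i,s_f)` of Definition 3.1: the exponential
formula on segments not crossing `0`, and `exp(i s_f H_s)|i⟩⟨j|exp(i s_i H_s)` on the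
segment crossing `0`. -/
noncomputable def Gij (Hs : Matrix (Fin 2) (Fin 2) ℂ) (i j : Fin 2) (si sf : ℝ) :
    Matrix (Fin 2) (Fin 2) ℂ :=
  if sf < 0 then NormedSpace.exp ((-Complex.I * ((sf : ℂ) - si)) • Hs)
  else if 0 ≤ si then NormedSpace.exp ((-Complex.I * ((si : ℂ) - sf)) • Hs)
  else NormedSpace.exp ((Complex.I * sf) • Hs) * Matrix.single i j (1 : ℂ) *
    NormedSpace.exp ((Complex.I * si) • Hs)

/-- The system associated functional
`𝒰_{ij}^{(0)}(lo, s_1,...,s_m, hi) = 𝒢_{ij}^{(0)}(s_m,hi) W_s ⋯ W_s 𝒢_{ij}^{(0)}(lo,s_1)`,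
defined by recursion on the list of interior time points. -/
noncomputable def Uij (Hs Ws : Matrix (Fin 2) (Fin 2) ℂ) (i j : Fin 2) :
    List ℝ → ℝ → ℝ → Matrix (Fin 2) (Fin 2) ℂ
  | [], lo, hi => Gij Hs i j lo hi
  | x :: rest, lo, hi => Uij Hs Ws i j rest x hi * Ws * Gij Hs i j lo x

/-- The shift map: add `Δt` to nonnegative points, subtract `Δt` from negative ones. -/
noncomputable def shiftPt (Δt x : ℝ) : ℝ := if 0 ≤ x then x + Δt else x - Δt

open NormedSpace Complex

theorem Matrix.exp_add_smul {m : Type*} [Fintype m] [DecidableEq m] (A : Matrix m m ℂ)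
    (a b : ℂ) : exp ((a + b) • A) = exp (a • A) * exp (b • A) := by
  rw [add_smul]
  exact Matrix.exp_add_of_commute _ _ (((Commute.refl A).smul_left a).smul_right b)

section Gij

variable (Hs : Matrix (Fin 2) (Fin 2) ℂ) (i j k l : Fin 2) {lo hi δ : ℝ}

theorem Gij_of_cross (hlo : lo < 0) (hhi : 0 ≤ hi) :
    Gij Hs i j lo hi =
      exp ((I * hi) • Hs) * Matrix.single i j (1 : ℂ) * exp ((I * lo) • Hs) := by
  rw [Gij, if_neg (not_lt.2 hhi), if_neg (not_le.2 hlo)]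

theorem Gij_sub_sub_of_neg (hhi : hi < 0) (hδ : 0 ≤ δ) :
    Gij Hs i j (lo - δ) (hi - δ) = Gij Hs k l lo hi := by
  rw [Gij, Gij, if_pos hhi, if_pos (by linarith)]
  push_cast
  ring_nf

theorem Gij_add_add_of_nonneg (hlo : 0 ≤ lo) (hhi : 0 ≤ hi) (hδ : 0 ≤ δ) :
    Gij Hs i j (lo + δ) (hi + δ) = Gij Hs k l lo hi := by
  rw [Gij, Gij, if_neg (not_lt.2 hhi), if_neg (not_lt.2 (by linarith)), if_pos hlo,
    if_pos (by linarith)]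
  push_cast
  ring_nf

theorem Gij_sub_add_of_cross (hlo : lo < 0) (hhi : 0 ≤ hi) (hδ : 0 ≤ δ) :
    Gij Hs i j (lo - δ) (hi + δ) = exp ((I * hi) • Hs) *
      (exp ((I * δ) • Hs) * Matrix.single i j (1 : ℂ) * exp ((-I * δ) • Hs)) *
        exp ((I * lo) • Hs) := by
  have hhi' : I * ((hi + δ : ℝ) : ℂ) = I * hi + I * δ := by push_cast; ring
  have hlo' : I * ((lo - δ : ℝ) : ℂ) = -I * δ + I * lo := by push_cast; ring
  rw [Gij_of_cross Hs i j (by linarith) (by linarith), hhi', hlo', Matrix.exp_add_smul,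
    Matrix.exp_add_smul]
  simp only [mul_assoc]

theorem Gij_sub_add_of_cross_eq_sum (b : Fin 2 → Fin 2 → ℂ)
    (hb : exp ((I * δ) • Hs) * Matrix.single i j (1 : ℂ) * exp ((-I * δ) • Hs) =
      ∑ k, ∑ l, b k l • Matrix.single k l (1 : ℂ))
    (hlo : lo < 0) (hhi : 0 ≤ hi) (hδ : 0 ≤ δ) :
    Gij Hs i j (lo - δ) (hi + δ) = ∑ k, ∑ l, b k l • Gij Hs k l lo hi := by
  rw [Gij_sub_add_of_cross Hs i j hlo hhi hδ, hb]
  simp only [Finset.mul_sum, Finset.sum_mul, mul_smul_comm, smul_mul_assoc,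
    Gij_of_cross Hs _ _ hlo hhi]

end Gij

section Uij

variable (Hs Ws : Matrix (Fin 2) (Fin 2) ℂ) (i j k l : Fin 2) {δ : ℝ}

theorem Uij_map_shiftPt_add_add_of_nonneg (hδ : 0 ≤ δ) :
    ∀ ss : List ℝ, (∀ x ∈ ss, 0 ≤ x) → ∀ {lo hi : ℝ}, 0 ≤ lo → 0 ≤ hi →
      Uij Hs Ws i j (ss.map (shiftPt δ)) (lo + δ) (hi + δ) = Uij Hs Ws k l ss lo hi
  | [], _, _, _, hlo, hhi => Gij_add_add_of_nonneg Hs i j k l hlo hhi hδ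
  | x :: rest, hss, _, _, hlo, hhi => by
    have hx : 0 ≤ x := hss x List.mem_cons_self
    have hrest : ∀ y ∈ rest, 0 ≤ y := fun y hy => hss y (List.mem_cons_of_mem x hy)
    simp only [List.map_cons, Uij, shiftPt, if_pos hx]
    rw [Uij_map_shiftPt_add_add_of_nonneg hδ rest hrest hx hhi,
      Gij_add_add_of_nonneg Hs i j k l hlo hx hδ]

theorem Uij_map_shiftPt_sub_add_of_sorted (b : Fin 2 → Fin 2 → ℂ)
    (hb : exp ((I * δ) • Hs) * Matrix.single i j (1 : ℂ) * exp ((-I * δ) • Hs) =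
      ∑ k, ∑ l, b k l • Matrix.single k l (1 : ℂ)) (hδ : 0 ≤ δ) :
    ∀ ss : List ℝ, ss.Pairwise (· ≤ ·) → ∀ {lo hi : ℝ}, lo < 0 → 0 ≤ hi →
      Uij Hs Ws i j (ss.map (shiftPt δ)) (lo - δ) (hi + δ) =
        ∑ k, ∑ l, b k l • Uij Hs Ws k l ss lo hi
  | [], _, _, _, hlo, hhi => Gij_sub_add_of_cross_eq_sum Hs i j b hb hlo hhi hδ
  | x :: rest, hsort, lo, hi, hlo, hhi => by
    obtain ⟨hx_le, hrest_sort⟩ := List.pairwise_cons.mp hsort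
    by_cases hx : 0 ≤ x
    · -- `[lo, x]` is the crossing segment; everything above it is nonnegative
      have hrest : ∀ y ∈ rest, 0 ≤ y := fun y hy => hx.trans (hx_le y hy)
      simp only [List.map_cons, Uij, shiftPt, if_pos hx,
        Gij_sub_add_of_cross_eq_sum Hs i j b hb hlo hx hδ, Finset.mul_sum, mul_smul_comm]
      refine Finset.sum_congr rfl fun k _ => Finset.sum_congr rfl fun l _ => ?_
      rw [Uij_map_shiftPt_add_add_of_nonneg Hs Ws i j k l hδ rest hrest hx hhi]
    · have hx_neg : x < 0 := lt_of_not_ge hx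
      simp only [List.map_cons, Uij, shiftPt, if_neg hx,
        Uij_map_shiftPt_sub_add_of_sorted b hb hδ rest hrest_sort hx_neg hhi, Finset.sum_mul,
        smul_mul_assoc]
      refine Finset.sum_congr rfl fun k _ => Finset.sum_congr rfl fun l _ => ?_
      rw [Gij_sub_sub_of_neg Hs i j k l hx_neg hδ]

end Uij

theorem Uij_shift_general (Hs Ws : Matrix (Fin 2) (Fin 2) ℂ) (i j : Fin 2)
    (t Δt : ℝ) (ht : 0 < t) (hΔt : 0 ≤ Δt)
    (ss : List ℝ) (hsort : ss.Pairwise (· ≤ ·))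
    (b : Fin 2 → Fin 2 → ℂ)
    (hb : NormedSpace.exp ((Complex.I * Δt) • Hs) * Matrix.single i j (1 : ℂ) *
        NormedSpace.exp ((-Complex.I * Δt) • Hs) =
      ∑ k, ∑ l, b k l • Matrix.single k l (1 : ℂ)) :
    Uij Hs Ws i j (ss.map (shiftPt Δt)) (-(t + Δt)) (t + Δt) =
      ∑ k, ∑ l, b k l • Uij Hs Ws k l ss (-t) t := by
  rw [neg_add']
  exact Uij_map_shiftPt_sub_add_of_sorted Hs Ws i j b hb hΔt ss hsort (neg_neg_of_pos ht) ht.le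

/-- Lemma 2.4 of the paper:
`𝒰_{ij}^{(0)}(-t−Δt, I_{Δt}(s), t+Δt) = Σ_{k,l} b_{kl}^{ij} 𝒰_{kl}^{(0)}(-t, s, t)`,
where `exp(iΔt H_s)|i⟩⟨j|exp(−iΔt H_s) = Σ_{k,l} b_{kl}^{ij}|k⟩⟨l|`. -/
theorem Uij_shift (Hs Ws : Matrix (Fin 2) (Fin 2) ℂ) (i j : Fin 2)
    (t Δt : ℝ) (ht : 0 < t) (hΔt : 0 ≤ Δt)
    (ss : List ℝ) (hsort : ss.Pairwise (· ≤ ·)) (hmem : ∀ x ∈ ss, -t ≤ x ∧ x ≤ t)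
    (b : Fin 2 → Fin 2 → ℂ)
    (hb : NormedSpace.exp ((Complex.I * Δt) • Hs) * Matrix.single i j (1 : ℂ) *
        NormedSpace.exp ((-Complex.I * Δt) • Hs) =
      ∑ k, ∑ l, b k l • Matrix.single k l (1 : ℂ)) :
    Uij Hs Ws i j (ss.map (shiftPt Δt)) (-(t + Δt)) (t + Δt) =
      ∑ k, ∑ l, b k l • Uij Hs Ws k l ss (-t) t :=
  Uij_shift_general Hs Ws i j t Δt ht hΔt ss hsort b hb
end

section
/- The domain decomposition identity: for t ≥ 0, Δt ≥ 0 and m ≥ 1, the simplex {-t−Δt ≤ s_1 ≤ ... ≤ s_m ≤ t+Δt} is the disjoint union (up to measure zero) of the image I_{Δt}({-t ≤ s ≤ t}) and the set T_{t+Δt}^{(m)} = { -t−Δt ≤ s ≤ t+Δt : ∃ j, |s_j| ≤ Δt }. -/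
/-- The ordered simplex `{a ≤ s_1 ≤ ... ≤ s_m ≤ b}`. -/
def simplexSet (m : ℕ) (a b : ℝ) : Set (Fin m → ℝ) :=
  {s | Monotone s ∧ ∀ i, a ≤ s i ∧ s i ≤ b}

/-- The shift map `I_{Δt}`. -/
noncomputable def Ishift (Δt : ℝ) {m : ℕ} (s : Fin m → ℝ) : Fin m → ℝ :=
  fun k => if 0 ≤ s k then s k + Δt else s k - Δt

/-!
Coordinatewise, `I_Δ` is the map `x ↦ x + Δ·sign x` (with `sign 0 = 1`), which is strictly
monotone with `|I_Δ x| = |x| + Δ`. Hence every point of the big simplex with all `|s_j| > Δ` has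
a monotone preimage in `[-t, t]^m`, and the remaining points lie in `T`. A point of `T` in the
image satisfies `|u_j| + Δ ≤ Δ` for some `j`, so `u_j = 0` and `s_j = Δ`: the overlap lies in
finitely many hyperplanes.
-/

open MeasureTheory

noncomputable def shiftAway (Δ x : ℝ) : ℝ :=
  if 0 ≤ x then x + Δ else x - Δ

section shiftAway

variable {Δ : ℝ}

theorem shiftAway_strictMono (hΔ : 0 ≤ Δ) : StrictMono (shiftAway Δ) := by
  intro x y hxy
  unfold shiftAway
  split_ifs <;> linarith

theorem abs_shiftAway (hΔ : 0 ≤ Δ) (x : ℝ) : |shiftAway Δ x| = |x| + Δ := by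
  unfold shiftAway
  split_ifs with hx
  · rw [abs_of_nonneg hx, abs_of_nonneg (by linarith)]
  · rw [abs_of_neg (not_le.mp hx), abs_of_neg (by linarith)]
    ring

theorem exists_shiftAway_eq (y : ℝ) (hy : Δ < |y|) : ∃ x, shiftAway Δ x = y := by
  rcases le_or_gt 0 y with hy0 | hy0
  · rw [abs_of_nonneg hy0] at hy
    exact ⟨y - Δ, by simp [shiftAway, show 0 ≤ y - Δ by linarith]⟩
  · rw [abs_of_neg hy0] at hy
    exact ⟨y + Δ, by simp [shiftAway, show ¬0 ≤ y + Δ by linarith]⟩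

theorem shiftAway_eq_of_abs_le (hΔ : 0 ≤ Δ) {x : ℝ} (hx : |shiftAway Δ x| ≤ Δ) :
    shiftAway Δ x = Δ := by
  rw [abs_shiftAway hΔ] at hx
  have hx0 : x = 0 := abs_nonpos_iff.mp (by linarith)
  simp [shiftAway, hx0]

end shiftAway

section Ishift

variable {m : ℕ} {Δ t : ℝ}

theorem Ishift_eq_comp (Δ : ℝ) (s : Fin m → ℝ) : Ishift Δ s = shiftAway Δ ∘ s := rfl

theorem mem_simplexSet_neg_iff {b : ℝ} {s : Fin m → ℝ} :
    s ∈ simplexSet m (-b) b ↔ Monotone s ∧ ∀ i, |s i| ≤ b := by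
  simp only [simplexSet, Set.mem_ofPred_eq, abs_le]

theorem Ishift_mem_simplexSet (hΔ : 0 ≤ Δ) {u : Fin m → ℝ} (hu : u ∈ simplexSet m (-t) t) :
    Ishift Δ u ∈ simplexSet m (-(t + Δ)) (t + Δ) := by
  rw [mem_simplexSet_neg_iff] at hu ⊢
  refine ⟨(shiftAway_strictMono hΔ).monotone.comp hu.1, fun i => ?_⟩
  rw [Ishift_eq_comp, Function.comp_apply, abs_shiftAway hΔ]
  linarith [hu.2 i]

theorem mem_image_Ishift_of_lt_abs (hΔ : 0 ≤ Δ) {s : Fin m → ℝ}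
    (hs : s ∈ simplexSet m (-(t + Δ)) (t + Δ)) (hsΔ : ∀ j, Δ < |s j|) :
    s ∈ Ishift Δ '' simplexSet m (-t) t := by
  choose u hu using fun j => exists_shiftAway_eq (s j) (hsΔ j)
  have hsu : Ishift Δ u = s := funext hu
  rw [mem_simplexSet_neg_iff] at hs
  refine ⟨u, mem_simplexSet_neg_iff.mpr ⟨fun i j hij => ?_, fun i => ?_⟩, hsu⟩
  · rw [← (shiftAway_strictMono hΔ).le_iff_le, hu, hu]
    exact hs.1 hij
  · have := hs.2 i
    rw [← hu, abs_shiftAway hΔ] at this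
    linarith

theorem image_Ishift_inter_subset (hΔ : 0 ≤ Δ) (A : Set (Fin m → ℝ)) :
    Ishift Δ '' A ∩ {s | ∃ j, |s j| ≤ Δ} ⊆ ⋃ j, {s | s j = Δ} := by
  rintro _ ⟨⟨u, -, rfl⟩, j, hj⟩
  exact Set.mem_iUnion.mpr ⟨j, shiftAway_eq_of_abs_le hΔ hj⟩

end Ishift

theorem simplex_decomposition_general (m : ℕ) (t Δt : ℝ) (hΔt : 0 ≤ Δt) :
    simplexSet m (-(t + Δt)) (t + Δt) =
      (Ishift Δt '' simplexSet m (-t) t) ∪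
        {s ∈ simplexSet m (-(t + Δt)) (t + Δt) | ∃ j, |s j| ≤ Δt} ∧
    MeasureTheory.volume
      ((Ishift Δt '' simplexSet m (-t) t) ∩
        {s ∈ simplexSet m (-(t + Δt)) (t + Δt) | ∃ j, |s j| ≤ Δt}) = 0 := by
  constructor
  · refine Set.Subset.antisymm (fun s hs => ?_) (Set.union_subset ?_ fun s hs => hs.1)
    · by_cases hT : ∀ j, Δt < |s j|
      · exact Or.inl (mem_image_Ishift_of_lt_abs hΔt hs hT)
      · obtain ⟨j, hj⟩ := not_forall.mp hT
        exact Or.inr ⟨hs, j, not_lt.mp hj⟩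
    · rintro _ ⟨u, hu, rfl⟩
      exact Ishift_mem_simplexSet hΔt hu
  · have hsub : Ishift Δt '' simplexSet m (-t) t ∩
        {s ∈ simplexSet m (-(t + Δt)) (t + Δt) | ∃ j, |s j| ≤ Δt} ⊆ ⋃ j, {s | s j = Δt} :=
      (Set.inter_subset_inter_right _ fun _ hs => hs.2).trans (image_Ishift_inter_subset hΔt _)
    refine measure_mono_null hsub (measure_iUnion_null fun j => ?_)
    rw [volume_pi]
    exact Measure.pi_hyperplane (fun _ : Fin m => (volume : Measure ℝ)) j Δt

/-- Domain decomposition: the simplex `{-t−Δt ≤ s ≤ t+Δt}` is the union of the image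
`I_{Δt}({-t ≤ s ≤ t})` and `T_{t+Δt}^{(m)} = {s in the big simplex : ∃ j, |s_j| ≤ Δt}`,
and the intersection of the two sets has Lebesgue measure zero. -/
theorem simplex_decomposition (m : ℕ) (hm : 1 ≤ m) (t Δt : ℝ) (ht : 0 ≤ t) (hΔt : 0 ≤ Δt) :
    simplexSet m (-(t + Δt)) (t + Δt) =
      (Ishift Δt '' simplexSet m (-t) t) ∪
        {s ∈ simplexSet m (-(t + Δt)) (t + Δt) | ∃ j, |s j| ≤ Δt} ∧
    MeasureTheory.volume
      ((Ishift Δt '' simplexSet m (-t) t) ∩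
        {s ∈ simplexSet m (-(t + Δt)) (t + Δt) | ∃ j, |s j| ≤ Δt}) = 0 :=
  simplex_decomposition_general m t Δt hΔt
end
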